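/- arXiv:0808.0748 — 6 statements merged into one kernel-verified Lean document; each statement's English description precedes it below -/
import Mathlib

section
/- For any n ≥ 3, any t ∈ ℝ, and any i ≠ j, the transfer fidelity in the complete graph satisfies |[exp(-i·t·H(K_n))]_{ij}| ≤ 2/n; in particular, the complete graph K_n does not admit perfect state transfer between distinct vertices. -/
/-! `P = n⁻¹ • J` is idempotent (the projection onto constant vectors), and
`-itH = a • (1 - P) + c • P` where `a` and `c` are `-it` times the two eigenvalues
`n(n-5)/2` and `n(n-5)/2 + 2n` of `H`. Since the powers of such a combination are
`aᵏ • (1 - P) + cᵏ • P`, we get `exp(-itH) = eᵃ • (1 - P) + eᶜ • P`, whose off-diagonal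
entries `(eᶜ - eᵃ)/n` have modulus at most `2/n < 1`. -/

theorem IsIdempotentElem.smul_one_sub_add_smul_pow {R A : Type*} [CommRing R] [Ring A]
    [Algebra R A] {p : A} (hp : IsIdempotentElem p) (a b : R) (k : ℕ) :
    (a • (1 - p) + b • p) ^ k = a ^ k • (1 - p) + b ^ k • p := by
  induction k with
  | zero => simp
  | succ k ih =>
    rw [pow_succ, ih]
    simp only [add_mul, mul_add, smul_mul_smul_comm, hp.one_sub.eq, hp.eq,
      hp.mul_one_sub_self, hp.one_sub_mul_self, smul_zero, add_zero, zero_add, pow_succ]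

theorem IsIdempotentElem.exp_smul_one_sub_add_smul {𝕂 A : Type*} [RCLike 𝕂] [Ring A]
    [Algebra 𝕂 A] [TopologicalSpace A] [IsTopologicalRing A] [ContinuousSMul 𝕂 A] [T2Space A]
    {p : A} (hp : IsIdempotentElem p) (a b : 𝕂) :
    NormedSpace.exp (a • (1 - p) + b • p) =
      NormedSpace.exp a • (1 - p) + NormedSpace.exp b • p := by
  rw [NormedSpace.exp_eq_tsum 𝕂]
  refine HasSum.tsum_eq ?_
  simp only [hp.smul_one_sub_add_smul_pow, smul_add, smul_smul, ← smul_eq_mul]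
  exact ((NormedSpace.exp_series_hasSum_exp' (𝕂 := 𝕂) a).smul_const (1 - p)).add
    ((NormedSpace.exp_series_hasSum_exp' (𝕂 := 𝕂) b).smul_const p)

theorem Matrix.isIdempotentElem_inv_card_smul_of_one {ι K : Type*} [Fintype ι] [Field K]
    (h : (Fintype.card ι : K) ≠ 0) :
    IsIdempotentElem ((Fintype.card ι : K)⁻¹ • Matrix.of fun _ _ : ι => (1 : K)) := by
  ext x y
  simp [Matrix.mul_apply, h]

/-- For `n ≥ 3`, any time `t` and distinct vertices `i ≠ j`, the transfer
fidelity in the complete graph satisfies `|[exp(-itH(K_n))]_{ij}| ≤ 2/n`; in particular,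
`K_n` admits no perfect state transfer between distinct vertices. -/
theorem complete_graph_no_pst (n : ℕ) (hn : 3 ≤ n) (t : ℝ)
    (H : Matrix (Fin n) (Fin n) ℂ)
    (hH : H = ((n * (n - 5) / 2 : ℂ)) • (1 : Matrix (Fin n) (Fin n) ℂ)
        + 2 • (Matrix.of fun _ _ : Fin n => (1 : ℂ)))
    (i j : Fin n) (hij : i ≠ j) :
    ‖NormedSpace.exp ((-(Complex.I * t)) • H) i j‖ ≤ 2 / n ∧
    ‖NormedSpace.exp ((-(Complex.I * t)) • H) i j‖ ≠ 1 := by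
  have hn0 : (n : ℂ) ≠ 0 := Nat.cast_ne_zero.mpr (by omega)
  set P : Matrix (Fin n) (Fin n) ℂ := (n : ℂ)⁻¹ • Matrix.of fun _ _ => 1
  have hP : IsIdempotentElem P := by
    have := Matrix.isIdempotentElem_inv_card_smul_of_one (ι := Fin n) (K := ℂ) (by simpa using hn0)
    rwa [Fintype.card_fin] at this
  set a : ℂ := (-(t * (n * (n - 5) / 2)) : ℝ) * Complex.I
  set c : ℂ := (-(t * (n * (n - 5) / 2 + 2 * n)) : ℝ) * Complex.I
  have hspec : (-(Complex.I * t)) • H = a • (1 - P) + c • P := by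
    subst hH
    ext x y
    simp only [P, a, c, Matrix.add_apply, Matrix.sub_apply, Matrix.smul_apply, Matrix.one_apply,
      Matrix.of_apply, smul_eq_mul]
    push_cast
    split_ifs <;> field_simp <;> ring
  have hentry : NormedSpace.exp ((-(Complex.I * t)) • H) i j =
      (Complex.exp c - Complex.exp a) / n := by
    rw [hspec, hP.exp_smul_one_sub_add_smul]
    simp only [← Complex.exp_eq_exp_ℂ, Matrix.smul_of, Matrix.add_apply, Matrix.smul_apply,
      Matrix.sub_apply, Matrix.one_apply_ne hij, Matrix.of_apply, Pi.smul_apply, smul_eq_mul,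
      mul_one, zero_sub, mul_neg, P]
    ring
  have hbound : ‖NormedSpace.exp ((-(Complex.I * t)) • H) i j‖ ≤ 2 / n := by
    rw [hentry, norm_div, Complex.norm_natCast]
    gcongr
    calc ‖Complex.exp c - Complex.exp a‖
        ≤ ‖Complex.exp c‖ + ‖Complex.exp a‖ := norm_sub_le _ _
      _ = 2 := by simp only [a, c, Complex.norm_exp_ofReal_mul_I]; norm_num
  refine ⟨hbound, fun hone => ?_⟩
  have hle : (2 : ℝ) / n ≤ 2 / 3 := by gcongr; exact_mod_cast hn
  linarith
end

section
/- For any n ≥ 1, any vertex i, and any t ∈ ℝ, the return fidelity in the complete graph satisfies |[exp(-i·t·H(K_n))]_{ii}| ≥ 1 - 2/n. -/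
/-!
With `P = n⁻¹ J` the orthogonal projection onto the constant vectors, `H(Kₙ) = a (1 - P) + b P`
for real `a, b`. Hence `exp (-i t H) = e^{-ita} (1 - P) + e^{-itb} P`, whose diagonal entries are
`(1 - 1/n) e^{-ita} + (1/n) e^{-itb}`, of modulus at least `(1 - 1/n) - 1/n`.
-/

open NormedSpace

theorem IsIdempotentElem.pow_smul_one_sub_add_smul {R 𝔸 : Type*} [CommSemiring R] [Ring 𝔸]
    [Algebra R 𝔸] {P : 𝔸} (hP : IsIdempotentElem P) (α β : R) (k : ℕ) :
    (α • (1 - P) + β • P) ^ k = α ^ k • (1 - P) + β ^ k • P := by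
  have hQ : IsIdempotentElem (1 - P) := hP.one_sub
  have hPQ : P * (1 - P) = 0 := by rw [mul_sub, mul_one, hP.eq, sub_self]
  have hQP : (1 - P) * P = 0 := by rw [sub_mul, one_mul, hP.eq, sub_self]
  induction k with
  | zero => simp
  | succ k ih =>
    rw [pow_succ, ih]
    simp only [add_mul, mul_add, smul_mul_smul, hQ.eq, hP.eq, hPQ, hQP, smul_zero, add_zero,
      zero_add, pow_succ]

theorem IsIdempotentElem.exp_smul_one_sub_add_smul_s6 {𝕂 𝔸 : Type*} [RCLike 𝕂] [NormedRing 𝔸]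
    [NormedAlgebra 𝕂 𝔸] [CompleteSpace 𝔸] {P : 𝔸} (hP : IsIdempotentElem P) (α β : 𝕂) :
    exp (α • (1 - P) + β • P) = exp α • (1 - P) + exp β • P := by
  refine (exp_series_hasSum_exp' (𝕂 := 𝕂) _).unique ?_
  simp only [hP.pow_smul_one_sub_add_smul, smul_add, smul_smul]
  exact ((exp_series_hasSum_exp' (𝕂 := 𝕂) α).smul_const _).add
    ((exp_series_hasSum_exp' (𝕂 := 𝕂) β).smul_const _)

theorem Matrix.exp_smul_one_sub_add_smul_s6 {m 𝕂 : Type*} [Fintype m] [DecidableEq m] [RCLike 𝕂]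
    {P : Matrix m m 𝕂} (hP : IsIdempotentElem P) (α β : 𝕂) :
    exp (α • (1 - P) + β • P) = exp α • (1 - P) + exp β • P := by
  open scoped Norms.Operator in exact hP.exp_smul_one_sub_add_smul_s6 α β

theorem Matrix.isIdempotentElem_inv_card_smul_allOnes {m 𝕜 : Type*} [Fintype m] [Nonempty m]
    [Field 𝕜] [CharZero 𝕜] :
    IsIdempotentElem ((Fintype.card m : 𝕜)⁻¹ • Matrix.of fun _ _ : m => (1 : 𝕜)) := by
  ext p q
  simp [Matrix.mul_apply]

theorem sub_two_mul_le_norm_one_sub_smul_add_smul {E : Type*} [SeminormedAddCommGroup E]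
    [NormedSpace ℝ E] {u v : E} (hu : ‖u‖ = 1) (hv : ‖v‖ = 1) {p : ℝ} (hp : 0 ≤ p) :
    1 - 2 * p ≤ ‖(1 - p) • u + p • v‖ :=
  calc 1 - 2 * p ≤ |1 - p| - p := by linarith [le_abs_self (1 - p)]
    _ = ‖(1 - p) • u‖ - ‖p • v‖ := by
      rw [norm_smul, norm_smul, hu, hv, Real.norm_eq_abs, Real.norm_of_nonneg hp, mul_one, mul_one]
    _ ≤ ‖(1 - p) • u + p • v‖ := norm_sub_le_norm_add _ _

theorem complete_graph_return_fidelity_lower_bound_general (n : ℕ) (t : ℝ)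
    (H : Matrix (Fin n) (Fin n) ℂ)
    (hH : H = ((n * (n - 5) / 2 : ℂ)) • (1 : Matrix (Fin n) (Fin n) ℂ)
        + 2 • (Matrix.of fun _ _ : Fin n => (1 : ℂ)))
    (i : Fin n) :
    1 - 2 / n ≤ ‖NormedSpace.exp ((-(Complex.I * t)) • H) i i‖ := by
  have : Nonempty (Fin n) := ⟨i⟩
  have hn : (n : ℂ) ≠ 0 := Nat.cast_ne_zero.2 (Fin.pos i).ne'
  set P : Matrix (Fin n) (Fin n) ℂ := (n : ℂ)⁻¹ • Matrix.of fun _ _ => 1 with hPdef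
  have hP : IsIdempotentElem P := by
    simpa only [Fintype.card_fin] using
      Matrix.isIdempotentElem_inv_card_smul_allOnes (m := Fin n) (𝕜 := ℂ)
  have hJ : (Matrix.of fun _ _ : Fin n => (1 : ℂ)) = (n : ℂ) • P := by
    rw [hPdef, smul_smul, mul_inv_cancel₀ hn, one_smul]
  have hdecomp : (-(Complex.I * t)) • H
      = (((-(t * (n * (n - 5) / 2)) : ℝ) : ℂ) * Complex.I) • (1 - P)
        + (((-(t * (n * (n - 5) / 2 + 2 * n)) : ℝ) : ℂ) * Complex.I) • P := by
    rw [hH, hJ]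
    push_cast
    module
  have hentry (α β : ℂ) : (exp α • (1 - P) + exp β • P) i i
      = (1 - (n : ℝ)⁻¹) • exp α + (n : ℝ)⁻¹ • exp β := by
    simp only [hPdef, Matrix.smul_of, Matrix.add_apply, Matrix.smul_apply, Matrix.sub_apply,
      Matrix.one_apply_eq, Matrix.of_apply, Pi.smul_apply, smul_eq_mul, mul_one,
      Complex.real_smul, Complex.ofReal_sub, Complex.ofReal_one, Complex.ofReal_inv,
      Complex.ofReal_natCast]
    ring
  rw [hdecomp, Matrix.exp_smul_one_sub_add_smul_s6 hP, hentry, ← Complex.exp_eq_exp_ℂ]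
  calc 1 - 2 / (n : ℝ) = 1 - 2 * (n : ℝ)⁻¹ := by ring
    _ ≤ _ := sub_two_mul_le_norm_one_sub_smul_add_smul (Complex.norm_exp_ofReal_mul_I _)
      (Complex.norm_exp_ofReal_mul_I _) (inv_nonneg.2 n.cast_nonneg)

/-- For any `n ≥ 1`, vertex `i` and time `t`, the return fidelity in the
complete graph satisfies `|[exp(-itH(K_n))]_{ii}| ≥ 1 - 2/n`. -/
theorem complete_graph_return_fidelity_lower_bound (n : ℕ) (hn : 1 ≤ n) (t : ℝ)
    (H : Matrix (Fin n) (Fin n) ℂ)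
    (hH : H = ((n * (n - 5) / 2 : ℂ)) • (1 : Matrix (Fin n) (Fin n) ℂ)
        + 2 • (Matrix.of fun _ _ : Fin n => (1 : ℂ)))
    (i : Fin n) :
    1 - 2 / n ≤ ‖NormedSpace.exp ((-(Complex.I * t)) • H) i i‖ :=
  complete_graph_return_fidelity_lower_bound_general n t H hH i
end

section
/- For U_t = exp(-i·t·H(K_n)) and t = π·k/n with k ≥ 1 an integer, |[U_t]_{ii}| = 1 for every i and [U_t]_{ij} = 0 for every i ≠ j; i.e., U_t is a diagonal unitary (the excitation returns perfectly to its starting site). -/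
/-!
Write `H(K_n) = c • 1 + 2 • J` with `J` the all-ones matrix. Since `J * J = n • J`, the matrix
`P = n⁻¹ • J` is idempotent, and for idempotent `P` the exponential series collapses to
`exp (s • P) = 1 + (eˢ - 1) • P`. The `J`-part of `-i t H` is `-2 i t n • P`, and at `t = π k / n`
the scalar `-2 i t n = -2 π i k` has `e^{-2πik} = 1`, so that part exponentiates to the identity.
Hence `U_t = e^{-i t c} • 1` is a unimodular multiple of the identity.
-/

open NormedSpace Matrix

section IdempotentExp

variable {A : Type*} [Ring A] [Algebra ℂ A] [TopologicalSpace A] [IsTopologicalRing A]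
  [ContinuousSMul ℂ A] [T2Space A]

theorem IsIdempotentElem.exp_smul {P : A} (hP : IsIdempotentElem P) (s : ℂ) :
    exp (s • P) = 1 + (Complex.exp s - 1) • P := by
  have hterm : ∀ m : ℕ, (m.factorial : ℂ)⁻¹ • (s • P) ^ m
      = ((m.factorial : ℂ)⁻¹ • s ^ m) • P + if m = 0 then 1 - P else 0 := by
    rintro (_ | m)
    · simp
    · rw [if_neg m.succ_ne_zero, add_zero, smul_pow, hP.pow_succ_eq, smul_smul, smul_eq_mul]
  have hsum : HasSum (fun m : ℕ => (m.factorial : ℂ)⁻¹ • (s • P) ^ m)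
      (Complex.exp s • P + (1 - P)) := by
    simp_rw [hterm, Complex.exp_eq_exp_ℂ]
    exact ((exp_series_hasSum_exp' s).smul_const P).add (hasSum_ite_eq 0 (1 - P))
  rw [exp_eq_tsum ℂ]
  beta_reduce
  rw [hsum.tsum_eq]
  module

theorem exp_smul_one (a : ℂ) : exp (a • (1 : A)) = Complex.exp a • 1 := by
  rw [IsIdempotentElem.one.exp_smul]
  module

end IdempotentExp

namespace Matrix

variable {ι : Type*} [Fintype ι]

theorem of_const_one_mul_self {R : Type*} [NonAssocSemiring R] :
    (of fun _ _ : ι => (1 : R)) * of (fun _ _ => 1) = (Fintype.card ι : R) • of fun _ _ => 1 := by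
  ext i j
  simp [mul_apply]

theorem isIdempotentElem_inv_card_smul_of_const_one [Nonempty ι] {K : Type*} [Field K]
    [CharZero K] : IsIdempotentElem ((Fintype.card ι : K)⁻¹ • of fun _ _ : ι => (1 : K)) := by
  have hcard : (Fintype.card ι : K) ≠ 0 := by exact_mod_cast Fintype.card_ne_zero
  rw [IsIdempotentElem, smul_mul_smul_comm, of_const_one_mul_self, smul_smul,
    inv_mul_cancel_right₀ hcard]

theorem exp_smul_of_const_one_eq_one [DecidableEq ι] [Nonempty ι] {s : ℂ}
    (hs : Complex.exp (s * Fintype.card ι) = 1) : exp (s • of fun _ _ : ι => (1 : ℂ)) = 1 := by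
  have hcard : (Fintype.card ι : ℂ) ≠ 0 := by exact_mod_cast Fintype.card_ne_zero
  have hJ : s • of (fun _ _ : ι => (1 : ℂ))
      = (s * Fintype.card ι) • ((Fintype.card ι : ℂ)⁻¹ • of fun _ _ => 1) := by
    rw [smul_smul, mul_inv_cancel_right₀ hcard]
  rw [hJ, isIdempotentElem_inv_card_smul_of_const_one.exp_smul, hs, sub_self, zero_smul, add_zero]

end Matrix

theorem complete_graph_perfect_return_general (n : ℕ) (hn : 1 ≤ n) (k : ℕ)
    (t : ℝ) (ht : t = Real.pi * k / n)
    (H : Matrix (Fin n) (Fin n) ℂ)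
    (hH : H = ((n * (n - 5) / 2 : ℂ)) • (1 : Matrix (Fin n) (Fin n) ℂ)
        + 2 • (Matrix.of fun _ _ : Fin n => (1 : ℂ)))
    (U : Matrix (Fin n) (Fin n) ℂ)
    (hU : U = NormedSpace.exp ((-(Complex.I * t)) • H)) :
    (∀ i : Fin n, ‖U i i‖ = 1) ∧
    (∀ i j : Fin n, i ≠ j → U i j = 0) := by
  have : NeZero n := ⟨by omega⟩
  set J : Matrix (Fin n) (Fin n) ℂ := of fun _ _ => 1
  set θ : ℝ := -(t * (n * (n - 5) / 2))
  have hsplit : (-(Complex.I * t)) • H = (θ * Complex.I) • 1 + (-2 * Complex.I * t) • J := by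
    rw [hH]; push_cast [θ]; module
  have hperiod : Complex.exp (-2 * Complex.I * t * Fintype.card (Fin n)) = 1 := by
    have htn : (t : ℂ) * n = Real.pi * k := by
      rw [ht]; push_cast; exact div_mul_cancel₀ _ (NeZero.ne _)
    rw [Fintype.card_fin, mul_assoc, htn, ← Complex.exp_int_mul_two_pi_mul_I (-k)]
    congr 1; push_cast; ring
  have hUscalar : U = Complex.exp (θ * Complex.I) • 1 := by
    rw [hU, hsplit, exp_add_of_commute _ _ ((Commute.one_left J).smul_left _ |>.smul_right _),
      exp_smul_of_const_one_eq_one hperiod, exp_smul_one, mul_one]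
  refine ⟨fun i => ?_, fun i j hij => ?_⟩
  · simp [hUscalar, Complex.norm_exp_ofReal_mul_I]
  · simp [hUscalar, one_apply_ne hij]

/-- For `U_t = exp(-itH(K_n))` and `t = πk/n` with integer `k ≥ 1`,
`|[U_t]_{ii}| = 1` for every `i` and `[U_t]_{ij} = 0` for `i ≠ j`. -/
theorem complete_graph_perfect_return (n : ℕ) (hn : 1 ≤ n) (k : ℕ) (hk : 1 ≤ k)
    (t : ℝ) (ht : t = Real.pi * k / n)
    (H : Matrix (Fin n) (Fin n) ℂ)
    (hH : H = ((n * (n - 5) / 2 : ℂ)) • (1 : Matrix (Fin n) (Fin n) ℂ)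
        + 2 • (Matrix.of fun _ _ : Fin n => (1 : ℂ)))
    (U : Matrix (Fin n) (Fin n) ℂ)
    (hU : U = NormedSpace.exp ((-(Complex.I * t)) • H)) :
    (∀ i : Fin n, ‖U i i‖ = 1) ∧
    (∀ i j : Fin n, i ≠ j → U i j = 0) :=
  complete_graph_perfect_return_general n hn k t ht H hH U hU
end

section
/- The matrix H(K_n^-) = (n(n-1)/2 - 1)·I_n - 2·(n·I_n - J_n - P_n) has eigenvalues λ₁ = n(n-1)/2 - 1 with multiplicity 1, λ₂ = n(n-1)/2 - 2n + 3 with multiplicity 1, and λ₃ = n(n-5)/2 - 1 with multiplicity n - 2. -/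
open Polynomial

lemma eval_charpoly' {m : ℕ} (M : Matrix (Fin m) (Fin m) ℝ) (x : ℝ) :
    (M.charpoly).eval x = (x • (1 : Matrix (Fin m) (Fin m) ℝ) - M).det := by
  rw [Matrix.charpoly, ← coe_evalRingHom, RingHom.map_det]
  congr 1
  ext i j
  by_cases h : i = j
  · subst h; simp [Matrix.one_apply]
  · simp [Matrix.charmatrix_apply, Matrix.diagonal_apply, Matrix.one_apply, h]


/-- `H(K_n^-) = (n(n-1)/2 - 1)·I - 2·(n·I - J - P)` has eigenvalues
`n(n-1)/2 - 1` (multiplicity 1), `n(n-1)/2 - 2n + 3` (multiplicity 1) and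
`n(n-5)/2 - 1` (multiplicity n-2), expressed via the characteristic polynomial. -/
theorem complete_minus_edge_eigenvalues (n : ℕ) (hn : 3 ≤ n)
    (a b : Fin n) (ha : (a : ℕ) = 0) (hb : (b : ℕ) = n - 1)
    (P : Matrix (Fin n) (Fin n) ℝ)
    (hP : P = Matrix.of fun i j =>
      if (i = a ∧ j = a) ∨ (i = b ∧ j = b) then 1
      else if (i = a ∧ j = b) ∨ (i = b ∧ j = a) then -1 else 0)
    (H : Matrix (Fin n) (Fin n) ℝ)
    (hH : H = (n * (n - 1) / 2 - 1 : ℝ) • (1 : Matrix (Fin n) (Fin n) ℝ)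
        - 2 • ((n : ℝ) • (1 : Matrix (Fin n) (Fin n) ℝ)
            - (Matrix.of fun _ _ : Fin n => (1 : ℝ)) - P)) :
    H.charpoly = (X - C (n * (n - 1) / 2 - 1 : ℝ))
        * (X - C (n * (n - 1) / 2 - 2 * n + 3 : ℝ))
        * (X - C (n * (n - 5) / 2 - 1 : ℝ)) ^ (n - 2) := by
  have hab : a ≠ b := by
    intro h; rw [h] at ha; omega
  have hba : b ≠ a := hab.symm
  set u : Fin n → ℝ := fun i => if i = a then 1 else if i = b then -1 else 0 with hu
  set U : Matrix (Fin n) (Fin 2) ℝ := Matrix.of fun i k => if k = 0 then 1 else u i with hU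
  set V : Matrix (Fin 2) (Fin n) ℝ := Matrix.of fun k j => if k = 0 then 2 else 2 * u j with hV
  -- decomposition
  have hM : H = ((n : ℝ) * (n - 5) / 2 - 1) • (1 : Matrix (Fin n) (Fin n) ℝ) + U * V := by
    rw [hH, hP]
    ext i j
    simp only [Matrix.add_apply, Matrix.sub_apply, Matrix.smul_apply, Matrix.one_apply,
      Matrix.mul_apply, Fin.sum_univ_two, Matrix.of_apply, hU, hV, hu, smul_eq_mul,
      Matrix.smul_apply, smul_sub, Matrix.sub_apply]
    by_cases hij : i = j <;>
      by_cases hia : i = a <;> by_cases hib : i = b <;>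
      by_cases hja : j = a <;> by_cases hjb : j = b <;>
      simp_all <;> ring
  -- sums of u
  have husplit : ∀ k, u k = (if k = a then (1:ℝ) else 0) + (if k = b then -1 else 0) := by
    intro k
    simp only [hu]
    by_cases h1 : k = a <;> by_cases h2 : k = b <;> simp [h1, h2, hab, hba]
  have hsum : ∑ k, u k = 0 := by
    simp [husplit, Finset.sum_add_distrib]
  have hsum2 : ∑ k, u k * u k = 2 := by
    have huu : ∀ k, u k * u k = (if k = a then (1:ℝ) else 0) + (if k = b then 1 else 0) := by
      intro k
      simp only [hu]
      by_cases h1 : k = a <;> by_cases h2 : k = b <;> simp [h1, h2, hab, hba]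
    rw [Finset.sum_congr rfl fun k _ => huu k, Finset.sum_add_distrib]
    simp
    norm_num
  -- VU entries
  have hVU00 : (V * U) 0 0 = 2 * n := by
    simp [Matrix.mul_apply, hU, hV, Finset.card_univ, mul_comm]
  have hVU01 : (V * U) 0 1 = 0 := by
    simp [Matrix.mul_apply, hU, hV, ← Finset.mul_sum, hsum]
  have hVU10 : (V * U) 1 0 = 0 := by
    simp [Matrix.mul_apply, hU, hV, ← Finset.mul_sum, hsum]
  have hVU11 : (V * U) 1 1 = 4 := by
    have h2uu : ∀ k, (2 * u k) * u k = 2 * (u k * u k) := fun k => by ring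
    simp only [Matrix.mul_apply, hU, hV, Matrix.of_apply, if_neg (by decide : ¬(1:Fin 2) = 0)]
    rw [Finset.sum_congr rfl fun k _ => h2uu k, ← Finset.mul_sum, hsum2]
    norm_num
  apply Polynomial.eq_of_infinite_eval_eq
  apply Set.Infinite.mono (s := ({(n : ℝ) * (n - 5) / 2 - 1}ᶜ : Set ℝ))
  swap
  · exact (Set.finite_singleton _).infinite_compl
  intro x hx
  simp only [Set.mem_compl_iff, Set.mem_singleton_iff] at hx
  simp only [Set.mem_setOf_eq]
  obtain ⟨t, ht⟩ : ∃ t : ℝ, t = x - ((n : ℝ) * (n - 5) / 2 - 1) := ⟨_, rfl⟩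
  have htne : t ≠ 0 := by rw [ht]; exact sub_ne_zero.mpr hx
  have hxt : x = t + ((n : ℝ) * (n - 5) / 2 - 1) := by rw [ht]; ring
  subst hxt
  have key : (t + ((n : ℝ) * (n - 5) / 2 - 1)) • (1 : Matrix (Fin n) (Fin n) ℝ) - H
      = t • ((1 : Matrix (Fin n) (Fin n) ℝ) + ((-(t⁻¹)) • U) * V) := by
    rw [hM]
    ext i j
    simp only [Matrix.sub_apply, Matrix.add_apply, Matrix.smul_apply, Matrix.one_apply,
      Matrix.smul_mul, smul_eq_mul]
    by_cases hij : i = j <;> simp only [hij, if_true, if_false] <;> field_simp <;> ring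
  rw [eval_charpoly', key, Matrix.det_smul, Matrix.det_one_add_mul_comm, Matrix.mul_smul]
  have e00 : ((1 : Matrix (Fin 2) (Fin 2) ℝ) + (-(t⁻¹)) • (V * U)) 0 0
      = 1 + -(t⁻¹) * (2 * n) := by
    rw [Matrix.add_apply, Matrix.smul_apply, hVU00, Matrix.one_apply_eq, smul_eq_mul]
  have e01 : ((1 : Matrix (Fin 2) (Fin 2) ℝ) + (-(t⁻¹)) • (V * U)) 0 1 = 0 := by
    rw [Matrix.add_apply, Matrix.smul_apply, hVU01, Matrix.one_apply_ne (by decide),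
      smul_eq_mul]
    ring
  have e10 : ((1 : Matrix (Fin 2) (Fin 2) ℝ) + (-(t⁻¹)) • (V * U)) 1 0 = 0 := by
    rw [Matrix.add_apply, Matrix.smul_apply, hVU10, Matrix.one_apply_ne (by decide),
      smul_eq_mul]
    ring
  have e11 : ((1 : Matrix (Fin 2) (Fin 2) ℝ) + (-(t⁻¹)) • (V * U)) 1 1
      = 1 + -(t⁻¹) * 4 := by
    rw [Matrix.add_apply, Matrix.smul_apply, hVU11, Matrix.one_apply_eq, smul_eq_mul]
  have hdet2 : ((1 : Matrix (Fin 2) (Fin 2) ℝ) + (-(t⁻¹)) • (V * U)).det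
      = (1 + -(t⁻¹) * (2 * n)) * (1 + -(t⁻¹) * 4) := by
    rw [Matrix.det_fin_two, e00, e01, e10, e11]; ring
  rw [hdet2]
  have hcard : Fintype.card (Fin n) = n := by simp
  rw [hcard]
  have hnpow : t ^ n = t ^ (n - 2) * t ^ 2 := by
    rw [← pow_add]; congr 1; omega
  simp only [eval_mul, eval_pow, eval_sub, eval_X, eval_C]
  rw [hnpow]
  have h1 : t + ((n : ℝ) * (n - 5) / 2 - 1) - ((n : ℝ) * (n - 1) / 2 - 1) = t - 2 * n := by ring
  have h2 : t + ((n : ℝ) * (n - 5) / 2 - 1) - ((n : ℝ) * (n - 1) / 2 - 2 * n + 3)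
      = t - 4 := by ring
  have h3 : t + ((n : ℝ) * (n - 5) / 2 - 1) - ((n : ℝ) * (n - 5) / 2 - 1) = t := by ring
  rw [h1, h2, h3]
  field_simp
  ring
end

section
/- An eigenbasis for H(K_n^-) consists of: the all-ones vector (eigenvalue n(n-1)/2 - 1), the vector e₁ - e_n (eigenvalue n(n-1)/2 - 2n + 3), and n-2 vectors orthogonal to both of these spanning the eigenspace of eigenvalue n(n-5)/2 - 1. -/
/-- An eigenbasis for `H(K_n^-)`: the all-ones vector (eigenvalue
`n(n-1)/2 - 1`), the vector `e_a - e_b` (eigenvalue `n(n-1)/2 - 2n + 3`), and `n-2`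
linearly independent vectors orthogonal to both of these which span the eigenspace of
eigenvalue `n(n-5)/2 - 1`. -/
theorem complete_minus_edge_eigenbasis (n : ℕ) (hn : 3 ≤ n)
    (a b : Fin n) (ha : (a : ℕ) = 0) (hb : (b : ℕ) = n - 1)
    (P : Matrix (Fin n) (Fin n) ℝ)
    (hP : P = Matrix.of fun i j =>
      if (i = a ∧ j = a) ∨ (i = b ∧ j = b) then 1
      else if (i = a ∧ j = b) ∨ (i = b ∧ j = a) then -1 else 0)
    (H : Matrix (Fin n) (Fin n) ℝ)
    (hH : H = (n * (n - 1) / 2 - 1 : ℝ) • (1 : Matrix (Fin n) (Fin n) ℝ)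
        - 2 • ((n : ℝ) • (1 : Matrix (Fin n) (Fin n) ℝ)
            - (Matrix.of fun _ _ : Fin n => (1 : ℝ)) - P)) :
    H.mulVec (fun _ => 1) = (n * (n - 1) / 2 - 1 : ℝ) • (fun _ => (1 : ℝ) : Fin n → ℝ) ∧
    H.mulVec (Pi.single a 1 - Pi.single b 1)
      = (n * (n - 1) / 2 - 2 * n + 3 : ℝ) • (Pi.single a 1 - Pi.single b 1 : Fin n → ℝ) ∧
    ∃ w : Fin (n - 2) → (Fin n → ℝ), LinearIndependent ℝ w ∧
      (∀ k, (∑ i, w k i = 0) ∧ w k a = w k b) ∧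
      Submodule.span ℝ (Set.range w)
        = Module.End.eigenspace (Matrix.toLin' H) (n * (n - 5) / 2 - 1 : ℝ) := by
  have hab : a ≠ b := by intro h; rw [h, hb] at ha; omega
  set c₁ : ℝ := (n * (n - 1) / 2 - 1 : ℝ) with hc₁
  set u : Fin n → ℝ := Pi.single a 1 - Pi.single b 1 with hu
  have hua : u a = 1 := by simp [hu, Pi.single_apply, hab]
  have hub : u b = -1 := by simp [hu, Pi.single_apply, hab.symm]
  have husum : ∑ j, u j = 0 := by
    simp [hu, Pi.sub_apply, Finset.sum_sub_distrib]
  have hPu : P = Matrix.vecMulVec u u := by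
    subst hP; ext i j
    simp only [Matrix.of_apply, Matrix.vecMulVec_apply, hu, Pi.sub_apply, Pi.single_apply]
    rcases eq_or_ne i a with hia | hia <;> rcases eq_or_ne i b with hib | hib <;>
      rcases eq_or_ne j a with hja | hja <;> rcases eq_or_ne j b with hjb | hjb <;>
      simp_all
  -- general mulVec formula
  have hmul : ∀ v : Fin n → ℝ, H.mulVec v
      = fun i => (c₁ - 2 * n) * v i + 2 * (∑ j, v j) + 2 * (v a - v b) * u i := by
    intro v
    subst hH hPu
    funext i
    simp only [Matrix.mulVec, dotProduct, Matrix.sub_apply, Matrix.smul_apply,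
      Matrix.one_apply, Matrix.of_apply, Matrix.vecMulVec_apply, smul_eq_mul]
    have key : ∀ j, (c₁ * (if i = j then (1:ℝ) else 0)
        - 2 • ((n:ℝ) * (if i = j then (1:ℝ) else 0) - 1 - u i * u j)) * v j
        = (c₁ - 2*n) * ((if i = j then (1:ℝ) else 0) * v j) + 2 * v j + 2 * (u i * (u j * v j)) := by
      intro j; rcases eq_or_ne i j with h | h <;> simp [h] <;> ring
    rw [Finset.sum_congr rfl fun j _ => key j]
    rw [Finset.sum_add_distrib, Finset.sum_add_distrib, ← Finset.mul_sum, ← Finset.mul_sum,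
      ← Finset.mul_sum, ← Finset.mul_sum]
    have h1 : ∑ j, (if i = j then (1:ℝ) else 0) * v j = v i := by
      simp [Finset.sum_ite_eq]
    have h2 : ∑ j, u j * v j = v a - v b := by
      simp [hu, Pi.sub_apply, Pi.single_apply, sub_mul, Finset.sum_sub_distrib]
    rw [h1, h2]; ring
  refine ⟨?_, ?_, ?_⟩
  · rw [hmul]; funext i; simp
  · rw [hmul]
    funext i
    simp only [husum, hua, hub, Pi.smul_apply, smul_eq_mul, hc₁]
    ring
  · -- the eigenspace part
    set μ : ℝ := (n * (n - 5) / 2 - 1 : ℝ) with hμ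
    have hμeq : μ = c₁ - 2 * n := by rw [hμ, hc₁]; ring
    -- characterization of the eigenspace
    have hchar : ∀ v : Fin n → ℝ, H.mulVec v = μ • v ↔ ((∑ j, v j) = 0 ∧ v a = v b) := by
      intro v
      rw [hmul, hμeq]
      constructor
      · intro hv
        obtain ⟨c, hc1⟩ : ∃ c : Fin n, (c:ℕ) = 1 := ⟨⟨1, by omega⟩, rfl⟩
        have hca : c ≠ a := by intro h; rw [h, ha] at hc1; omega
        have hcb : c ≠ b := by intro h; rw [h, hb] at hc1; omega
        have huc : u c = 0 := by simp [hu, Pi.single_apply, hca, hcb]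
        have hc' := congrFun hv c
        simp only [Pi.smul_apply, smul_eq_mul, huc, mul_zero, add_zero] at hc'
        have hsum : (∑ j, v j) = 0 := by linarith
        have hca' := congrFun hv a
        simp only [Pi.smul_apply, smul_eq_mul, hua, hsum, mul_zero, add_zero, mul_one] at hca'
        exact ⟨hsum, by linarith⟩
      · rintro ⟨h1, h2⟩
        funext i; simp [h1, h2]
    -- the family
    set ι : Fin (n-2) → Fin n := fun k => ⟨(k:ℕ)+1, by omega⟩ with hι
    have hιa : ∀ k, ι k ≠ a := by
      intro k h; have := congrArg Fin.val h; simp [hι, ha] at this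
    have hιb : ∀ k, ι k ≠ b := by
      intro k h; have := congrArg Fin.val h; simp [hι, hb] at this
      have := k.2; omega
    have hιinj : Function.Injective ι := by
      intro k k' h; have := congrArg Fin.val h; simp [hι] at this; exact Fin.ext this
    set w : Fin (n-2) → (Fin n → ℝ) :=
      fun k => Pi.single (ι k) 1 - (1/2 : ℝ) • (Pi.single a 1 + Pi.single b 1) with hw
    have hwapp : ∀ k i, w k i = (if i = ι k then (1:ℝ) else 0)
        - (1/2) * ((if i = a then (1:ℝ) else 0) + (if i = b then (1:ℝ) else 0)) := by
      intro k i
      simp only [hw, Pi.sub_apply, Pi.smul_apply, Pi.add_apply, Pi.single_apply, smul_eq_mul]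

    have hwsum : ∀ k, (∑ i, w k i) = 0 := by
      intro k
      simp only [hwapp]
      rw [Finset.sum_sub_distrib, ← Finset.mul_sum, Finset.sum_add_distrib]
      norm_num [Finset.sum_ite_eq']
    have hwab : ∀ k, w k a = w k b := by
      intro k
      rw [hwapp, hwapp]
      simp [Ne.symm (hιa k), Ne.symm (hιb k), hab, hab.symm]
    have hli : LinearIndependent ℝ w := by
      apply LinearIndependent.of_comp (LinearMap.funLeft ℝ ℝ ι)
      have hcomp : (LinearMap.funLeft ℝ ℝ ι) ∘ w = fun k => Pi.single k (1:ℝ) := by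
        funext k k'
        simp only [Function.comp_apply, LinearMap.funLeft_apply]
        rw [hwapp]
        simp [hιa k', hιb k', hιinj.eq_iff, Pi.single_apply, eq_comm]
      rw [hcomp]
      rw [Fintype.linearIndependent_iff]
      intro g hg k
      have := congrFun hg k
      simpa [Finset.sum_apply, Pi.single_apply, Finset.sum_ite_eq'] using this
    refine ⟨w, hli, fun k => ⟨hwsum k, hwab k⟩, ?_⟩
    apply le_antisymm
    · rw [Submodule.span_le]
      rintro x ⟨k, rfl⟩
      rw [SetLike.mem_coe, Module.End.mem_eigenspace_iff, Matrix.toLin'_apply, hchar]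
      exact ⟨hwsum k, hwab k⟩
    · intro v hv
      rw [Module.End.mem_eigenspace_iff, Matrix.toLin'_apply, hchar] at hv
      obtain ⟨h1, h2⟩ := hv
      have hsplit : ∀ f : Fin n → ℝ, ∑ j, f j = f a + f b + ∑ k, f (ι k) := by
        intro f
        have hmem : a ∈ Finset.univ := Finset.mem_univ a
        rw [← Finset.add_sum_erase _ f hmem]
        have hbmem : b ∈ Finset.univ.erase a := by
          simp [Finset.mem_erase, hab.symm]
        rw [← Finset.add_sum_erase _ f hbmem, ← add_assoc]
        congr 1
        refine (Finset.sum_nbij' (i := ι)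
          (j := fun x : Fin n => (⟨min ((x:ℕ)-1) (n-3), by omega⟩ : Fin (n-2)))
          ?_ ?_ ?_ ?_ ?_).symm
        · intro k _; simp [Finset.mem_erase, hιa k, hιb k]
        · intro x _; exact Finset.mem_univ _
        · intro k _
          apply Fin.ext
          have := k.2
          simp only [hι]
          omega
        · intro x hx
          simp only [Finset.mem_erase] at hx
          apply Fin.ext
          have hx0 : (x:ℕ) ≠ 0 := by
            intro h0; exact hx.2.1 (Fin.ext (by rw [h0, ha]))
          have hxn : (x:ℕ) ≠ n-1 := by
            intro h0; exact hx.1 (Fin.ext (by rw [h0, hb]))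
          have := x.2
          simp only [hι]
          omega
        · intro k _; rfl
      have hS : (∑ k, v (ι k)) = -2 * v a := by
        have hv' := hsplit v; rw [h1, ← h2] at hv'; linarith
      have hvrep : v = ∑ k, v (ι k) • w k := by
        funext i
        rw [Finset.sum_apply]
        simp only [Pi.smul_apply, smul_eq_mul, hwapp]
        have expand : ∀ k : Fin (n-2), v (ι k) * ((if i = ι k then (1:ℝ) else 0)
            - 1/2 * ((if i = a then (1:ℝ) else 0) + (if i = b then (1:ℝ) else 0)))
            = v (ι k) * (if i = ι k then (1:ℝ) else 0)
              - 1/2 * ((if i = a then (1:ℝ) else 0) + (if i = b then (1:ℝ) else 0)) * v (ι k) := by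
          intro k; ring
        rw [Finset.sum_congr rfl fun k _ => expand k, Finset.sum_sub_distrib, ← Finset.mul_sum, hS]
        rcases eq_or_ne i a with hia | hia
        · have hzero : ∀ k : Fin (n-2), v (ι k) * (if i = ι k then (1:ℝ) else 0) = 0 := by
            intro k; simp [hia, Ne.symm (hιa k)]
          rw [Finset.sum_congr rfl fun k _ => hzero k]
          simp [hia, hab]
        · rcases eq_or_ne i b with hib | hib
          · have hzero : ∀ k : Fin (n-2), v (ι k) * (if i = ι k then (1:ℝ) else 0) = 0 := by
              intro k; simp [hib, Ne.symm (hιb k)]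
            rw [Finset.sum_congr rfl fun k _ => hzero k]
            simp [hib, hab.symm]
            linarith
          · have hi0 : (i:ℕ) ≠ 0 := fun h0 => hia (Fin.ext (by rw [h0, ha]))
            have hin : (i:ℕ) ≠ n-1 := fun h0 => hib (Fin.ext (by rw [h0, hb]))
            set k₀ : Fin (n-2) := ⟨(i:ℕ)-1, by have := i.2; omega⟩ with hk₀
            have hik₀ : i = ι k₀ := by
              apply Fin.ext
              simp only [hι, hk₀]
              omega
            have hone : ∑ k, v (ι k) * (if i = ι k then (1:ℝ) else 0) = v (ι k₀) := by
              rw [Finset.sum_eq_single k₀]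
              · simp [← hik₀]
              · intro k _ hk
                have hne : i ≠ ι k := by
                  rw [hik₀]; exact fun h => hk (hιinj h).symm
                simp [hne]
              · simp
            rw [hone, ← hik₀]
            simp [hia, hib]
      rw [hvrep]
      exact Submodule.sum_mem _ fun k _ =>
        Submodule.smul_mem _ _ (Submodule.subset_span ⟨k, rfl⟩)
end

section
/- For U_t = exp(-ι·t·H(K_n^-)), the (1,1) entry equals n⁻¹·( (n/2)·e^{-ι(C-2n+3)t} + e^{-ι(C-1)t} + (n/2 - 1)·e^{-ι(n(n-5)/2 - 1)t} ) where C = n(n-1)/2, and the (1,n) entry equals n⁻¹·( e^{-ι(C-1)t} - (n/2)·e^{-ι(C-2n+3)t} + (n/2 - 1)·e^{-ι(n(n-5)/2 - 1)t} ). -/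
/-!
`H(K_n^-)` is `λ₁ E₁ + λ₂ E₂ + λ₃ (1 - E₁ - E₂)`, where `E₁` and `E₂` are the rank-one projections
onto the all-ones vector and onto `e_a - e_b`; these are orthogonal idempotents because the two
vectors are orthogonal. An idempotent `E` satisfies `exp (c • E) = 1 + (exp c - 1) • E` (all its
powers equal `E`), so for orthogonal idempotents summing to `1` the exponential of
`∑ cᵢ • Eᵢ` is `∑ exp cᵢ • Eᵢ`. The entries then come from `E₁ a a = E₁ a b = 1 / n` and
`E₂ a a = -E₂ a b = 1 / 2`.
-/

open NormedSpace Matrix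
open scoped Nat

section Exponential

variable {𝕂 𝔸 : Type*} [RCLike 𝕂] [NormedRing 𝔸] [NormedAlgebra 𝕂 𝔸] [CompleteSpace 𝔸]

theorem IsIdempotentElem.exp_smul_s14 {E : 𝔸} (hE : IsIdempotentElem E) (c : 𝕂) :
    exp (c • E) = 1 + (exp c - 1) • E := by
  have hterm : (fun k : ℕ => (k !⁻¹ : 𝕂) • (c • E) ^ k) =
      fun k => ((k !⁻¹ : 𝕂) • c ^ k) • E + if k = 0 then 1 - E else 0 := by
    funext k
    cases k with
    | zero => simp
    | succ k => simp [smul_pow, hE.pow_succ_eq, smul_smul]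
  have hsum := ((exp_series_hasSum_exp' (𝕂 := 𝕂) c).smul_const E).add (hasSum_ite_eq 0 (1 - E))
  rw [← hterm] at hsum
  rw [(exp_series_hasSum_exp' (c • E)).unique hsum, sub_smul, one_smul]
  abel

theorem exp_sum_smul_of_orthogonal {ι : Type*} {E : ι → 𝔸} (hidem : ∀ i, IsIdempotentElem (E i))
    (horth : Pairwise fun i j => E i * E j = 0) (c : ι → 𝕂) (s : Finset ι) :
    exp (∑ i ∈ s, c i • E i) = 1 + ∑ i ∈ s, (exp (c i) - 1) • E i := by
  classical
  induction s using Finset.induction_on with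
  | empty => simp
  | insert j s hj ih =>
    have hne : ∀ i ∈ s, i ≠ j := fun i hi => ne_of_mem_of_not_mem hi hj
    have hcomm : Commute (c j • E j) (∑ i ∈ s, c i • E i) := by
      refine Commute.sum_right _ _ _ fun i hi => ((?_ : Commute (E j) (E i)).smul_left _).smul_right _
      exact (horth (hne i hi).symm).trans (horth (hne i hi)).symm
    have hjs : E j * ∑ i ∈ s, (exp (c i) - 1) • E i = 0 := by
      rw [Finset.mul_sum]
      exact Finset.sum_eq_zero fun i hi => by rw [mul_smul_comm, horth (hne i hi).symm, smul_zero]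
    have hball : ∀ x : 𝔸, x ∈ Metric.eball 0 (expSeries 𝕂 𝔸).radius := by
      simp [expSeries_radius_eq_top]
    rw [Finset.sum_insert hj, Finset.sum_insert hj,
      exp_add_of_commute_of_mem_ball hcomm (hball _) (hball _), ih,
      (hidem j).exp_smul_s14, add_mul, one_mul, smul_mul_assoc, mul_add, mul_one, hjs, add_zero]
    abel

theorem exp_sum_smul_of_sum_eq_one {ι : Type*} [Fintype ι] {E : ι → 𝔸}
    (hidem : ∀ i, IsIdempotentElem (E i)) (horth : Pairwise fun i j => E i * E j = 0)
    (hsum : ∑ i, E i = 1) (c : ι → 𝕂) :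
    exp (∑ i, c i • E i) = ∑ i, exp (c i) • E i := by
  simp [exp_sum_smul_of_orthogonal hidem horth, sub_smul, Finset.sum_sub_distrib, hsum]

theorem exp_smul_add_smul_add_smul_one_sub {E₁ E₂ : 𝔸} (h₁ : IsIdempotentElem E₁)
    (h₂ : IsIdempotentElem E₂) (h₁₂ : E₁ * E₂ = 0) (h₂₁ : E₂ * E₁ = 0) (c₁ c₂ c₃ : 𝕂) :
    exp (c₁ • E₁ + c₂ • E₂ + c₃ • (1 - E₁ - E₂)) =
      exp c₁ • E₁ + exp c₂ • E₂ + exp c₃ • (1 - E₁ - E₂) := by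
  have hidem : ∀ i, IsIdempotentElem (![E₁, E₂, 1 - E₁ - E₂] i) := by
    intro i
    fin_cases i
    · exact h₁
    · exact h₂
    · simp [IsIdempotentElem, mul_sub, sub_mul, h₁.eq, h₂.eq, h₁₂, h₂₁]
  have horth : Pairwise fun i j => ![E₁, E₂, 1 - E₁ - E₂] i * ![E₁, E₂, 1 - E₁ - E₂] j = 0 := by
    intro i j hij
    fin_cases i <;> fin_cases j <;> simp_all [mul_sub, sub_mul, h₁.eq, h₂.eq]
  simpa [Fin.sum_univ_three, add_assoc] using
    exp_sum_smul_of_sum_eq_one hidem horth (by simp [Fin.sum_univ_three]) ![c₁, c₂, c₃]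

end Exponential

open scoped Norms.Operator in
theorem Matrix.exp_smul_add_smul_add_smul_one_sub {𝕂 m : Type*} [RCLike 𝕂] [Fintype m]
    [DecidableEq m] {E₁ E₂ : Matrix m m 𝕂} (h₁ : IsIdempotentElem E₁) (h₂ : IsIdempotentElem E₂)
    (h₁₂ : E₁ * E₂ = 0) (h₂₁ : E₂ * E₁ = 0) (c₁ c₂ c₃ : 𝕂) :
    exp (c₁ • E₁ + c₂ • E₂ + c₃ • (1 - E₁ - E₂)) =
      exp c₁ • E₁ + exp c₂ • E₂ + exp c₃ • (1 - E₁ - E₂) :=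
  _root_.exp_smul_add_smul_add_smul_one_sub h₁ h₂ h₁₂ h₂₁ c₁ c₂ c₃

section RankOne

variable {K m : Type*} [Field K] [Fintype m]

def rankOneProj (u : m → K) : Matrix m m K := (u ⬝ᵥ u)⁻¹ • vecMulVec u u

theorem rankOneProj_apply (u : m → K) (i j : m) : rankOneProj u i j = u i * u j / (u ⬝ᵥ u) := by
  simp [rankOneProj, vecMulVec_apply, div_eq_inv_mul]

theorem rankOneProj_mul_rankOneProj (u v : m → K) :
    rankOneProj u * rankOneProj v = ((u ⬝ᵥ u)⁻¹ * (v ⬝ᵥ v)⁻¹ * (u ⬝ᵥ v)) • vecMulVec u v := by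
  simp only [rankOneProj, smul_mul_smul, vecMulVec_mul_vecMulVec, vecMulVec_smul, smul_smul]

theorem isIdempotentElem_rankOneProj {u : m → K} (hu : u ⬝ᵥ u ≠ 0) :
    IsIdempotentElem (rankOneProj u) := by
  rw [IsIdempotentElem, rankOneProj_mul_rankOneProj, inv_mul_cancel_right₀ hu, rankOneProj]

theorem rankOneProj_mul_eq_zero {u v : m → K} (huv : u ⬝ᵥ v = 0) :
    rankOneProj u * rankOneProj v = 0 := by
  rw [rankOneProj_mul_rankOneProj, huv, mul_zero, zero_smul]

theorem dotProduct_self_smul_rankOneProj {u : m → K} (hu : u ⬝ᵥ u ≠ 0) :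
    (u ⬝ᵥ u) • rankOneProj u = vecMulVec u u := by
  rw [rankOneProj, smul_smul, mul_inv_cancel₀ hu, one_smul]

theorem of_one_eq_card_smul_rankOneProj_one (hm : (Fintype.card m : K) ≠ 0) :
    (Matrix.of fun _ _ : m => (1 : K)) = (Fintype.card m : K) • rankOneProj 1 := by
  have h11 : (1 : m → K) ⬝ᵥ 1 = Fintype.card m := one_dotProduct_one
  rw [← h11, dotProduct_self_smul_rankOneProj (h11 ▸ hm)]
  ext
  simp [vecMulVec_apply]

end RankOne

section SingleSubSingle

variable {R m : Type*} [Ring R] [DecidableEq m] {a b : m}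

theorem vecMulVec_single_sub_single (hab : a ≠ b) :
    vecMulVec (Pi.single a 1 - Pi.single b 1 : m → R) (Pi.single a 1 - Pi.single b 1) =
      Matrix.of fun i j =>
        if (i = a ∧ j = a) ∨ (i = b ∧ j = b) then 1
        else if (i = a ∧ j = b) ∨ (i = b ∧ j = a) then -1 else 0 := by
  ext i j
  by_cases hia : i = a <;> by_cases hib : i = b <;> by_cases hja : j = a <;> by_cases hjb : j = b <;>
    simp_all [vecMulVec_apply]

variable [Fintype m]

theorem one_dotProduct_single_sub_single (a b : m) :
    (1 : m → R) ⬝ᵥ (Pi.single a 1 - Pi.single b 1) = 0 := by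
  simp [dotProduct_sub]

theorem dotProduct_single_sub_single_self (hab : a ≠ b) :
    (Pi.single a 1 - Pi.single b 1 : m → R) ⬝ᵥ (Pi.single a 1 - Pi.single b 1) = 2 := by
  simp [dotProduct_sub, hab, hab.symm, one_add_one_eq_two]

end SingleSubSingle

theorem complete_minus_edge_evolution_entries_general (n : ℕ) (hn : 4 ≤ n)
    (t : ℝ) (a b : Fin n) (ha : (a : ℕ) = 0) (hb : (b : ℕ) = n - 1)
    (P : Matrix (Fin n) (Fin n) ℂ)
    (hP : P = Matrix.of fun i j =>
      if (i = a ∧ j = a) ∨ (i = b ∧ j = b) then 1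
      else if (i = a ∧ j = b) ∨ (i = b ∧ j = a) then -1 else 0)
    (H : Matrix (Fin n) (Fin n) ℂ)
    (hH : H = (n * (n - 1) / 2 - 1 : ℂ) • (1 : Matrix (Fin n) (Fin n) ℂ)
        - 2 • ((n : ℂ) • (1 : Matrix (Fin n) (Fin n) ℂ)
            - (Matrix.of fun _ _ : Fin n => (1 : ℂ)) - P))
    (U : Matrix (Fin n) (Fin n) ℂ)
    (hU : U = NormedSpace.exp ((-(Complex.I * t)) • H))
    (C : ℂ) (hC : C = n * (n - 1) / 2) :
    U a a = (n : ℂ)⁻¹ * ((n / 2) * Complex.exp (-(Complex.I) * ((C - 2 * n + 3) * t))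
        + Complex.exp (-(Complex.I) * ((C - 1) * t))
        + (n / 2 - 1) * Complex.exp (-(Complex.I) * ((n * (n - 5) / 2 - 1) * t))) ∧
    U a b = (n : ℂ)⁻¹ * (Complex.exp (-(Complex.I) * ((C - 1) * t))
        - (n / 2) * Complex.exp (-(Complex.I) * ((C - 2 * n + 3) * t))
        + (n / 2 - 1) * Complex.exp (-(Complex.I) * ((n * (n - 5) / 2 - 1) * t))) := by
  have hab : a ≠ b := Fin.ne_of_val_ne (by omega)
  have hn0 : (n : ℂ) ≠ 0 := by exact_mod_cast (by omega : n ≠ 0)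
  set v : Fin n → ℂ := Pi.single a 1 - Pi.single b 1
  have h11 : (1 : Fin n → ℂ) ⬝ᵥ 1 = n := by simp
  have hvv : v ⬝ᵥ v = 2 := dotProduct_single_sub_single_self hab
  have h1v : (1 : Fin n → ℂ) ⬝ᵥ v = 0 := one_dotProduct_single_sub_single a b
  have hJ : (Matrix.of fun _ _ : Fin n => (1 : ℂ)) = (n : ℂ) • rankOneProj 1 := by
    simpa using of_one_eq_card_smul_rankOneProj_one (m := Fin n) (by simpa using hn0)
  have hP' : P = (2 : ℂ) • rankOneProj v := by
    rw [hP, ← vecMulVec_single_sub_single hab, ← hvv,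
      dotProduct_self_smul_rankOneProj (hvv ▸ two_ne_zero)]
  have hH' : H = (C - 1) • rankOneProj 1 + (C - 2 * n + 3) • rankOneProj v
      + (n * (n - 5) / 2 - 1 : ℂ) • (1 - rankOneProj 1 - rankOneProj v) := by
    rw [hH, hJ, hP', hC]
    module
  have hUe : U = Complex.exp (-(Complex.I) * ((C - 1) * t)) • rankOneProj 1
      + Complex.exp (-(Complex.I) * ((C - 2 * n + 3) * t)) • rankOneProj v
      + Complex.exp (-(Complex.I) * ((n * (n - 5) / 2 - 1) * t))
        • (1 - rankOneProj 1 - rankOneProj v) := by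
    rw [hU, hH', smul_add, smul_add, smul_smul, smul_smul, smul_smul, Complex.exp_eq_exp_ℂ,
      Matrix.exp_smul_add_smul_add_smul_one_sub (isIdempotentElem_rankOneProj (h11 ▸ hn0))
        (isIdempotentElem_rankOneProj (hvv ▸ two_ne_zero)) (rankOneProj_mul_eq_zero h1v)
        (rankOneProj_mul_eq_zero (by rw [dotProduct_comm, h1v]))]
    simp only [show ∀ x : ℂ, -(Complex.I * t) * x = -Complex.I * (x * t) from fun x => by ring]
  rw [hUe]
  simp only [Matrix.add_apply, Matrix.sub_apply, Matrix.smul_apply, smul_eq_mul, one_apply_eq,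
    one_apply_ne hab, rankOneProj_apply, h11, hvv, v, Pi.one_apply, Pi.sub_apply, Pi.single_eq_same,
    Pi.single_eq_of_ne hab, Pi.single_eq_of_ne hab.symm]
  constructor <;> field_simp <;> ring

/-- For `U_t = exp(-ιtH(K_n^-))` (with `n` even, `n ≥ 4`, vertices `a`, `b`
the endpoints of the missing edge, and `C = n(n-1)/2`), the `(a,a)` entry equals
`n⁻¹((n/2)e^{-ι(C-2n+3)t} + e^{-ι(C-1)t} + (n/2-1)e^{-ι(n(n-5)/2-1)t})` and the
`(a,b)` entry equals
`n⁻¹(e^{-ι(C-1)t} - (n/2)e^{-ι(C-2n+3)t} + (n/2-1)e^{-ι(n(n-5)/2-1)t})`. -/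
theorem complete_minus_edge_evolution_entries (n : ℕ) (hn : 4 ≤ n) (heven : Even n)
    (t : ℝ) (a b : Fin n) (ha : (a : ℕ) = 0) (hb : (b : ℕ) = n - 1)
    (P : Matrix (Fin n) (Fin n) ℂ)
    (hP : P = Matrix.of fun i j =>
      if (i = a ∧ j = a) ∨ (i = b ∧ j = b) then 1
      else if (i = a ∧ j = b) ∨ (i = b ∧ j = a) then -1 else 0)
    (H : Matrix (Fin n) (Fin n) ℂ)
    (hH : H = (n * (n - 1) / 2 - 1 : ℂ) • (1 : Matrix (Fin n) (Fin n) ℂ)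
        - 2 • ((n : ℂ) • (1 : Matrix (Fin n) (Fin n) ℂ)
            - (Matrix.of fun _ _ : Fin n => (1 : ℂ)) - P))
    (U : Matrix (Fin n) (Fin n) ℂ)
    (hU : U = NormedSpace.exp ((-(Complex.I * t)) • H))
    (C : ℂ) (hC : C = n * (n - 1) / 2) :
    U a a = (n : ℂ)⁻¹ * ((n / 2) * Complex.exp (-(Complex.I) * ((C - 2 * n + 3) * t))
        + Complex.exp (-(Complex.I) * ((C - 1) * t))
        + (n / 2 - 1) * Complex.exp (-(Complex.I) * ((n * (n - 5) / 2 - 1) * t))) ∧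
    U a b = (n : ℂ)⁻¹ * (Complex.exp (-(Complex.I) * ((C - 1) * t))
        - (n / 2) * Complex.exp (-(Complex.I) * ((C - 2 * n + 3) * t))
        + (n / 2 - 1) * Complex.exp (-(Complex.I) * ((n * (n - 5) / 2 - 1) * t))) :=
  complete_minus_edge_evolution_entries_general n hn t a b ha hb P hP H hH U hU C hC
end
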